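/- arXiv:math/0701364 — 6 statements merged into one kernel-verified Lean document; each statement's English description precedes it below -/
import Mathlib

section
/- Let 𝒢 = (G, o, R_1, …, R_n) be a functional Menger system of rank n and let H be a nonempty subset of G. Then H is a stabilizer of 𝒢 if and only if H is a quasi-stable l-unitary normal v-complex and there exists a subset U of G with H ⊆ U, R_i U ⊆ H and R_i(G∖U) ⊆ G∖U for every i ∈ {1,…,n}, such that for all x, y, u ∈ G, w̄ ∈ G^n, t ∈ T_n(G) and i ∈ {1,…,n}: (i) if x ∈ H, y ∈ H and t(x) ∈ U, then t(y) ∈ U; (ii) if x = y[R_1x…R_nx] ∈ U and u[w̄|_i y] ∈ H then u[w̄|_i x] ∈ H, and also (the case of the empty outer symbol) if x = y[R_1x…R_nx] ∈ U and y ∈ H then x ∈ H; (iii) if x = y[R_1x…R_nx] ∈ U and u[w̄|_i y] ∈ U then u[w̄|_i x] ∈ U, and also if x = y[R_1x…R_nx] ∈ U and y ∈ U then x ∈ U. -/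
universe u

/-- A functional Menger system of rank `n`: an `(n+1)`-ary operation `o`
(written `x[y₁…yₙ]` in the paper) and `n` unary operations `R i`,
satisfying axioms A1–A7. -/
structure MengerSystem (n : ℕ) (G : Type u) where
  o : G → (Fin n → G) → G
  R : Fin n → G → G
  A1 : ∀ (x : G) (y z : Fin n → G),
    o (o x y) z = o x fun i => o (y i) z
  A2 : ∀ x : G, o x (fun i => R i x) = x
  A3 : ∀ (x : G) (u : Fin n → G) (i : Fin n) (z y : G),
    o (o x (Function.update u i z)) (fun j => R j y)
      = o x (Function.update u i (o z fun j => R j y))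
  A4 : ∀ (i : Fin n) (x y : G),
    R i (o x fun j => R j y) = o (R i x) fun j => R j y
  A5 : ∀ (x y z : G),
    o (o x fun j => R j y) (fun j => R j z)
      = o (o x fun j => R j z) (fun j => R j y)
  A6 : ∀ (i k : Fin n) (x : G) (y : Fin n → G),
    R i (o x y) = R i (o (R k x) y)
  A7 : ∀ (i : Fin n) (x : G) (y : Fin n → G),
    o (R i x) y = o (y i) fun j => R j (o x y)

namespace MengerSystem

variable {n : ℕ} {G : Type u}

/-- `T_n(G)`: the least set of transformations of `G` containing the identity and
closed under `t ↦ (x ↦ a[b̄|ᵢ t x])` and `t ↦ (x ↦ Rᵢ (t x))`. -/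
inductive IsTn (M : MengerSystem n G) : (G → G) → Prop
  | id : IsTn M id
  | op (t : G → G) (a : G) (b : Fin n → G) (i : Fin n) :
      IsTn M t → IsTn M fun x => M.o a (Function.update b i (t x))
  | proj (t : G → G) (i : Fin n) :
      IsTn M t → IsTn M fun x => M.R i (t x)

/-- quasi-stable: `x ∈ H → x[x…x] ∈ H`. -/
def QuasiStable (M : MengerSystem n G) (H : Set G) : Prop :=
  ∀ x ∈ H, M.o x (fun _ => x) ∈ H

/-- l-unitary: `x[y…y] ∈ H ∧ y ∈ H → x ∈ H`. -/
def LUnitary (M : MengerSystem n G) (H : Set G) : Prop :=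
  ∀ x y : G, M.o x (fun _ => y) ∈ H → y ∈ H → x ∈ H

/-- normal v-complex: `x, y ∈ H ∧ t x ∈ H → t y ∈ H` for all `t ∈ T_n(G)`. -/
def NormalVComplex (M : MengerSystem n G) (H : Set G) : Prop :=
  ∀ t : G → G, M.IsTn t → ∀ x ∈ H, ∀ y ∈ H, t x ∈ H → t y ∈ H

/-- stable: `x, y₁, …, yₙ ∈ H → x[y₁…yₙ] ∈ H`. -/
def Stable (M : MengerSystem n G) (H : Set G) : Prop :=
  ∀ (x : G) (y : Fin n → G), x ∈ H → (∀ i, y i ∈ H) → M.o x y ∈ H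

/-- v-unitary: `x[y₁…yₙ] ∈ H ∧ y₁, …, yₙ ∈ H → x ∈ H`. -/
def VUnitary (M : MengerSystem n G) (H : Set G) : Prop :=
  ∀ (x : G) (y : Fin n → G), M.o x y ∈ H → (∀ i, y i ∈ H) → x ∈ H

/-- l-ideal: `x[y₁…yₙ] ∈ H` whenever some `yᵢ ∈ H`. -/
def LIdeal (M : MengerSystem n G) (H : Set G) : Prop :=
  ∀ (x : G) (y : Fin n → G), (∃ i, y i ∈ H) → M.o x y ∈ H

/-- the order `x ≤ y ↔ x = y[R₁x…Rₙx]` (the relation ζ). -/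
def le (M : MengerSystem n G) (x y : G) : Prop :=
  x = M.o y fun i => M.R i x

/-- the quasi-order `x ⊏ y ↔ R₁x ≤ R₁y` (the relation χ). -/
def sub (M : MengerSystem n G) [NeZero n] (x y : G) : Prop :=
  M.le (M.R 0 x) (M.R 0 y)

/-- v-regular binary relation. -/
def VRegular (M : MengerSystem n G) (ρ : G → G → Prop) : Prop :=
  ∀ (z : G) (x y : Fin n → G), (∀ i, ρ (x i) (y i)) → ρ (M.o z x) (M.o z y)

end MengerSystem

/-- An `n`-place function on `A`: a partial map from `Aⁿ` to `A`. -/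
def NPlace (n : ℕ) (A : Type u) : Type u := (Fin n → A) → Part A

namespace NPlace

variable {n : ℕ} {A : Type u}

/-- Menger composition `f[g₁…gₙ]` of `n`-place functions. -/
def comp (f : NPlace n A) (g : Fin n → NPlace n A) : NPlace n A :=
  fun a =>
    (⟨∀ i, (g i a).Dom, fun h i => (g i a).get (h i)⟩ : Part (Fin n → A)).bind f

/-- `Rᵢ f`: same domain as `f`, value `(Rᵢ f)(a₁,…,aₙ) = aᵢ`. -/
def Ri (i : Fin n) (f : NPlace n A) : NPlace n A :=
  fun a => (f a).map fun _ => a i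

/-- Set-theoretic intersection of two `n`-place functions (as sets of pairs). -/
def inter (f g : NPlace n A) : NPlace n A :=
  fun a => ⟨(f a).Dom ∧ f a = g a, fun h => (f a).get h.1⟩

end NPlace

/-- A representation of a functional Menger system by `n`-place functions. -/
def MengerSystem.IsRep {n : ℕ} {G : Type u} (M : MengerSystem n G) {A : Type u}
    (P : G → NPlace n A) : Prop :=
  (∀ (x : G) (y : Fin n → G), P (M.o x y) = NPlace.comp (P x) fun i => P (y i)) ∧
  (∀ (i : Fin n) (x : G), P (M.R i x) = NPlace.Ri i (P x))

/-- A nonempty `H ⊆ G` is a stabilizer of `M` if there are a representation `P`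
on some set `A` and a point `a ∈ A` with `H = {g | P g (a,…,a) = a}`. -/
def MengerSystem.IsStabilizer {n : ℕ} {G : Type u} (M : MengerSystem n G)
    (H : Set G) : Prop :=
  ∃ (A : Type u) (P : G → NPlace n A) (a : A),
    M.IsRep P ∧ H = {g : G | a ∈ P g fun _ => a}

/-!
Necessity: for a representation `P` and a point `a`, take for `U` the set of `g` such that
`P g (a,…,a)` is defined. The value at `(a,…,a)` of `t x`, `t ∈ T_n(G)`, depends only on that of
`x`, and `x = y[R₁x…Rₙx]` forces `P x = P y` wherever `P x` is defined; every condition follows.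

Sufficiency: identify `x` and `y` when no `t ∈ T_n(G)` separates them by membership in `H` or in
`U` (`germ`). On the quotient, `g` acts by `(⟦y₁⟧,…,⟦yₙ⟧) ↦ ⟦g[y₁…yₙ]⟧`, defined iff
`g[y₁…yₙ] ∈ U`. This is a representation because `(Rᵢ g)[ȳ] ≤ yᵢ` and because `x ≤ y` with `x ∈ U`
makes `x` and `y` equivalent; the stabilizer of the class of any `h ∈ H` is `H`, which turns out to
be stable and v-unitary.
-/

open Function

theorem Equivalence.rel_of_rel_update {ι α β : Type*} [Fintype ι] [DecidableEq ι]
    {r : β → β → Prop} (hr : Equivalence r) {s : α → α → Prop} {f : (ι → α) → β}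
    (hf : ∀ (p : ι → α) (i : ι) (a b : α), s a b → r (f (update p i a)) (f (update p i b)))
    {p q : ι → α} (hpq : ∀ i, s (p i) (q i)) : r (f p) (f q) := by
  suffices ∀ S : Finset ι, r (f p) (f (S.piecewise q p)) by simpa using this Finset.univ
  intro S
  induction S using Finset.induction_on with
  | empty => simpa using hr.refl (f p)
  | insert j S hj ih =>
    rw [Finset.piecewise_insert]
    refine hr.trans ih ?_
    conv_lhs => rw [← update_eq_self j (S.piecewise q p), Finset.piecewise_eq_of_notMem _ _ _ hj]
    exact hf _ j _ _ (hpq j)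

namespace NPlace

variable {n : ℕ} {A : Type u}

theorem mem_comp (f : NPlace n A) (g : Fin n → NPlace n A) (v : Fin n → A) (b : A) :
    b ∈ comp f g v ↔ ∃ c : Fin n → A, (∀ i, c i ∈ g i v) ∧ b ∈ f c := by
  refine Part.mem_bind_iff.trans (exists_congr fun c => and_congr_left fun _ => ?_)
  rw [Part.mem_mk_iff]
  constructor
  · rintro ⟨hdom, rfl⟩ i
    exact Part.get_mem (hdom i)
  · intro hc
    exact ⟨fun i => (hc i).fst, funext fun i => Part.get_eq_of_mem (hc i) _⟩

def stabilizerAt {G : Type*} (P : G → NPlace n A) (a : A) : Set G :=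
  {g | a ∈ P g fun _ => a}

def domainAt {G : Type*} (P : G → NPlace n A) (a : A) : Set G :=
  {g | (P g fun _ => a).Dom}

theorem mem_stabilizerAt {G : Type*} {P : G → NPlace n A} {a : A} {g : G} :
    g ∈ stabilizerAt P a ↔ a ∈ P g fun _ => a :=
  Iff.rfl

theorem mem_domainAt {G : Type*} {P : G → NPlace n A} {a : A} {g : G} :
    g ∈ domainAt P a ↔ (P g fun _ => a).Dom :=
  Iff.rfl

theorem stabilizerAt_subset_domainAt {G : Type*} (P : G → NPlace n A) (a : A) :
    stabilizerAt P a ⊆ domainAt P a :=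
  fun _ hg => Part.dom_iff_mem.2 ⟨a, hg⟩

end NPlace

namespace MengerSystem

open NPlace

variable {n : ℕ} {G : Type u} (M : MengerSystem n G)

theorem R_R (j i : Fin n) (x : G) : M.R j (M.R i x) = M.R j x := by
  have h : M.o (M.R i x) (fun k => M.R k x) = M.R i x := by rw [← M.A4, M.A2]
  rw [← h, ← M.A6 j i x, M.A2]

theorem R_o (j : Fin n) (g : G) (y : Fin n → G) :
    M.R j (M.o g y) = M.o (M.R j (y j)) fun k => M.R k (M.o g y) := by
  rw [M.A6 j j g y, M.A7 j g y, M.A4]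

theorem o_R_le (z w : G) : M.le (M.o z fun j => M.R j w) z := by
  unfold le
  simp only [M.A4]
  rw [← M.A1, M.A2]

theorem le_o_update {p q : G} (u : G) (w : Fin n → G) (i : Fin n) (h : M.le p q) :
    M.le (M.o u (update w i p)) (M.o u (update w i q)) := by
  set s := M.o u (update w i p)
  -- `s = s[R̄p]`, so every `Rⱼ s` absorbs `[R̄p]`, and then `q[R̄s] = q[R̄p][R̄s] = p[R̄s]`.
  have hs : M.o s (fun j => M.R j p) = s := by rw [M.A3, M.A2]
  have hRs : (fun j => M.R j s) = fun j => M.o (M.R j s) fun k => M.R k p := by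
    funext j
    conv_lhs => rw [← hs]
    rw [M.A4]
  have hq : M.o q (fun j => M.R j s) = M.o p (fun j => M.R j s) := by
    conv_lhs => rw [hRs, ← M.A1, M.A5, ← h]
  show s = M.o (M.o u (update w i q)) fun j => M.R j s
  rw [M.A3, hq, ← M.A3, M.A2]

theorem le_R (i : Fin n) {p q : G} (h : M.le p q) : M.le (M.R i p) (M.R i q) := by
  show M.R i p = M.o (M.R i q) fun j => M.R j (M.R i p)
  simp only [M.R_R]
  conv_lhs => rw [h]
  exact M.A4 i q p

variable {M}

theorem IsTn.comp {t s : G → G} (ht : M.IsTn t) (hs : M.IsTn s) :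
    M.IsTn fun x => t (s x) := by
  induction ht with
  | id => exact hs
  | op t a b i _ ih => exact .op _ a b i ih
  | proj t i _ ih => exact .proj _ i ih

theorem IsTn.le_apply {t : G → G} (ht : M.IsTn t) {p q : G} (h : M.le p q) :
    M.le (t p) (t q) := by
  induction ht with
  | id => exact h
  | op t a b i _ ih => exact M.le_o_update a b i ih
  | proj t i _ ih => exact M.le_R i ih

section Representation

variable {A : Type u} {P : G → NPlace n A}

theorem IsRep.apply_o_congr (hP : M.IsRep P) (x : G) {y z : Fin n → G} {v : Fin n → A}
    (h : ∀ i, P (y i) v = P (z i) v) : P (M.o x y) v = P (M.o x z) v := by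
  ext b
  simp only [hP.1, mem_comp, h]

theorem IsRep.apply_o_update_congr (hP : M.IsRep P) (u : G) (w : Fin n → G) (i : Fin n)
    {p q : G} {v : Fin n → A} (h : P p v = P q v) :
    P (M.o u (update w i p)) v = P (M.o u (update w i q)) v :=
  hP.apply_o_congr u fun j => by rcases eq_or_ne j i with rfl | hj <;> simp [*]

theorem IsRep.apply_isTn_congr (hP : M.IsRep P) {t : G → G} (ht : M.IsTn t) {x y : G}
    {v : Fin n → A} (h : P x v = P y v) : P (t x) v = P (t y) v := by
  induction ht with
  | id => exact h
  | op t a b i _ ih => exact hP.apply_o_update_congr a b i ih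
  | proj t i _ ih => simp only [hP.2, Ri, ih]

theorem IsRep.R_apply_dom (hP : M.IsRep P) (i : Fin n) (x : G) (v : Fin n → A) :
    (P (M.R i x) v).Dom ↔ (P x v).Dom := by
  rw [hP.2]
  rfl

theorem IsRep.mem_R_apply (hP : M.IsRep P) (i : Fin n) (x : G) (v : Fin n → A) (b : A) :
    b ∈ P (M.R i x) v ↔ (P x v).Dom ∧ v i = b := by
  rw [hP.2, Ri, Part.mem_map_iff, Part.dom_iff_mem]
  simp only [exists_and_right]

theorem IsRep.apply_eq_of_le (hP : M.IsRep P) {x y : G} (hxy : M.le x y) {v : Fin n → A}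
    (hx : (P x v).Dom) : P x v = P y v := by
  have hR : ∀ c : Fin n → A, (∀ i, c i ∈ P (M.R i x) v) ↔ c = v := fun c => by
    simp only [hP.mem_R_apply, hx, true_and, funext_iff, eq_comm]
  ext b
  conv_lhs => rw [hxy]
  rw [hP.1, mem_comp]
  simp only [hR, exists_eq_left]

theorem IsRep.apply_o_update_eq_of_le (hP : M.IsRep P) (u : G) (w : Fin n → G) (i : Fin n)
    {x y : G} (hxy : M.le x y) {v : Fin n → A} (hx : (P x v).Dom) :
    P (M.o u (update w i x)) v = P (M.o u (update w i y)) v :=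
  hP.apply_o_update_congr u w i (hP.apply_eq_of_le hxy hx)

variable (a : A)

theorem IsRep.quasiStable (hP : M.IsRep P) : M.QuasiStable (stabilizerAt P a) := by
  intro x hx
  rw [mem_stabilizerAt, hP.1, mem_comp]
  exact ⟨_, fun _ => hx, hx⟩

theorem IsRep.lUnitary (hP : M.IsRep P) : M.LUnitary (stabilizerAt P a) := by
  intro x y hxy hy
  rw [mem_stabilizerAt, hP.1, mem_comp] at hxy
  obtain ⟨c, hc, hac⟩ := hxy
  obtain rfl : c = fun _ => a := funext fun i => Part.mem_unique (hc i) hy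
  exact hac

theorem IsRep.apply_isTn_eq_of_mem_stabilizerAt (hP : M.IsRep P) {t : G → G} (ht : M.IsTn t)
    {x y : G} (hx : x ∈ stabilizerAt P a) (hy : y ∈ stabilizerAt P a) :
    P (t x) (fun _ => a) = P (t y) (fun _ => a) :=
  hP.apply_isTn_congr ht ((Part.eq_some_iff.2 hx).trans (Part.eq_some_iff.2 hy).symm)

theorem IsRep.normalVComplex (hP : M.IsRep P) : M.NormalVComplex (stabilizerAt P a) :=
  fun _ ht _ hx _ hy htx => by
    rwa [mem_stabilizerAt, ← hP.apply_isTn_eq_of_mem_stabilizerAt a ht hx hy]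

theorem IsRep.isTn_mem_domainAt (hP : M.IsRep P) {t : G → G} (ht : M.IsTn t) {x y : G}
    (hx : x ∈ stabilizerAt P a) (hy : y ∈ stabilizerAt P a) (htx : t x ∈ domainAt P a) :
    t y ∈ domainAt P a := by
  rwa [mem_domainAt, ← hP.apply_isTn_eq_of_mem_stabilizerAt a ht hx hy]

theorem IsRep.R_mem_stabilizerAt (hP : M.IsRep P) (i : Fin n) {x : G}
    (hx : x ∈ domainAt P a) : M.R i x ∈ stabilizerAt P a :=
  (hP.mem_R_apply i x _ a).2 ⟨hx, rfl⟩

theorem IsRep.R_mem_domainAt_compl (hP : M.IsRep P) (i : Fin n) {x : G}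
    (hx : x ∈ (domainAt P a)ᶜ) : M.R i x ∈ (domainAt P a)ᶜ :=
  mt (hP.R_apply_dom i x _).1 hx

theorem IsRep.mem_stabilizerAt_of_le (hP : M.IsRep P) {x y : G} (hxy : M.le x y)
    (hx : x ∈ domainAt P a) (hy : y ∈ stabilizerAt P a) : x ∈ stabilizerAt P a := by
  rwa [mem_stabilizerAt, hP.apply_eq_of_le hxy hx]

theorem IsRep.o_update_mem_stabilizerAt_of_le (hP : M.IsRep P) {x y u : G} {w : Fin n → G}
    {i : Fin n} (hxy : M.le x y) (hx : x ∈ domainAt P a)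
    (h : M.o u (update w i y) ∈ stabilizerAt P a) : M.o u (update w i x) ∈ stabilizerAt P a := by
  rwa [mem_stabilizerAt, hP.apply_o_update_eq_of_le u w i hxy hx]

theorem IsRep.o_update_mem_domainAt_of_le (hP : M.IsRep P) {x y u : G} {w : Fin n → G}
    {i : Fin n} (hxy : M.le x y) (hx : x ∈ domainAt P a)
    (h : M.o u (update w i y) ∈ domainAt P a) : M.o u (update w i x) ∈ domainAt P a := by
  rwa [mem_domainAt, hP.apply_o_update_eq_of_le u w i hxy hx]

end Representation

variable (M)

def germ (H U : Set G) (x y : G) : Prop :=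
  ∀ t : G → G, M.IsTn t → (t x ∈ H ↔ t y ∈ H) ∧ (t x ∈ U ↔ t y ∈ U)

theorem germ_equivalence (H U : Set G) : Equivalence (M.germ H U) where
  refl _ _ _ := ⟨Iff.rfl, Iff.rfl⟩
  symm h t ht := ⟨(h t ht).1.symm, (h t ht).2.symm⟩
  trans h₁ h₂ t ht := ⟨(h₁ t ht).1.trans (h₂ t ht).1, (h₁ t ht).2.trans (h₂ t ht).2⟩

def germSetoid (H U : Set G) : Setoid G := ⟨M.germ H U, M.germ_equivalence H U⟩

variable {M} {H U : Set G}

theorem germ.mem_H_iff {x y : G} (h : M.germ H U x y) : x ∈ H ↔ y ∈ H := (h id .id).1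

theorem germ.mem_U_iff {x y : G} (h : M.germ H U x y) : x ∈ U ↔ y ∈ U := (h id .id).2

theorem germ.isTn {x y : G} (h : M.germ H U x y) {s : G → G} (hs : M.IsTn s) :
    M.germ H U (s x) (s y) :=
  fun _ ht => h _ (ht.comp hs)

theorem germ_o (g : G) {p q : Fin n → G} (h : ∀ i, M.germ H U (p i) (q i)) :
    M.germ H U (M.o g p) (M.o g q) :=
  (M.germ_equivalence H U).rel_of_rel_update
    (fun p i _ _ hab => hab.isTn (.op id g p i .id)) h

variable (M H U) in
noncomputable def germRep : G → NPlace n (Quotient (M.germSetoid H U)) := fun g v =>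
  ⟨M.o g (fun i => (v i).out) ∈ U, fun _ => Quotient.mk _ (M.o g fun i => (v i).out)⟩

theorem mem_germRep_mk (g : G) (y : Fin n → G) (b : Quotient (M.germSetoid H U)) :
    b ∈ M.germRep H U g (fun i => Quotient.mk _ (y i)) ↔
      M.o g y ∈ U ∧ Quotient.mk _ (M.o g y) = b := by
  have h : M.germ H U (M.o g fun i => (Quotient.mk (M.germSetoid H U) (y i)).out) (M.o g y) :=
    germ_o g fun i => Quotient.mk_out (s := M.germSetoid H U) (y i)
  rw [germRep, Part.mem_mk_iff, ← h.mem_U_iff, ← Quotient.sound (s := M.germSetoid H U) h,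
    exists_prop]

variable (M) in
structure StabilizerCriterion (H U : Set G) : Prop where
  quasiStable : M.QuasiStable H
  lUnitary : M.LUnitary H
  normalVComplex : M.NormalVComplex H
  subset : H ⊆ U
  R_mem : ∀ i : Fin n, ∀ x ∈ U, M.R i x ∈ H
  R_mem_compl : ∀ i : Fin n, ∀ x ∈ Uᶜ, M.R i x ∈ Uᶜ
  isTn_mem : ∀ (x y : G) (t : G → G), M.IsTn t → x ∈ H → y ∈ H → t x ∈ U → t y ∈ U
  mem_of_le : ∀ x y : G, M.le x y → x ∈ U → y ∈ H → x ∈ H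
  o_update_mem_of_le : ∀ (x y u : G) (w : Fin n → G) (i : Fin n),
    M.le x y → x ∈ U → M.o u (update w i y) ∈ U → M.o u (update w i x) ∈ U

namespace StabilizerCriterion

theorem mem_of_R_mem (hC : M.StabilizerCriterion H U) {i : Fin n} {x : G}
    (h : M.R i x ∈ U) : x ∈ U :=
  by_contra fun hx => hC.R_mem_compl i x hx h

theorem germ_of_mem (hC : M.StabilizerCriterion H U) {x y : G} (hx : x ∈ H) (hy : y ∈ H) :
    M.germ H U x y := fun t ht =>
  ⟨⟨hC.normalVComplex t ht x hx y hy, hC.normalVComplex t ht y hy x hx⟩,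
    ⟨hC.isTn_mem x y t ht hx hy, hC.isTn_mem y x t ht hy hx⟩⟩

theorem germ_o_of_mem (hC : M.StabilizerCriterion H U) (g : G) {p q : Fin n → G}
    (hp : ∀ i, p i ∈ H) (hq : ∀ i, q i ∈ H) : M.germ H U (M.o g p) (M.o g q) :=
  germ_o g fun i => hC.germ_of_mem (hp i) (hq i)

theorem stable (hC : M.StabilizerCriterion H U) : M.Stable H := fun x _ hx hy =>
  (hC.germ_o_of_mem x (fun _ => hx) hy).mem_H_iff.1 (hC.quasiStable x hx)

theorem vUnitary (hC : M.StabilizerCriterion H U) : M.VUnitary H := fun x _ hxy hy =>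
  hC.lUnitary x _ ((hC.germ_o_of_mem x hy fun _ => hxy).mem_H_iff.1 hxy) hxy

theorem mem_of_o_mem (hC : M.StabilizerCriterion H U) {g : G} {y : Fin n → G}
    (h : M.o g y ∈ U) (j : Fin n) : y j ∈ U := by
  have hRy : M.R j (y j) ∈ H :=
    hC.vUnitary _ _ (M.R_o j g y ▸ hC.R_mem j _ h) fun k => hC.R_mem k _ h
  exact hC.mem_of_R_mem (hC.subset hRy)

theorem mem_of_o_mem_of_forall_mem (hC : M.StabilizerCriterion H U) {y : G} {p : Fin n → G}
    (hp : ∀ j, p j ∈ H) (h : M.o y p ∈ U) : y ∈ U := by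
  rcases isEmpty_or_nonempty (Fin n) with hn | ⟨⟨j⟩⟩
  · rwa [Subsingleton.elim p fun i => M.R i y, M.A2] at h
  · have hRy : M.o (M.R j y) p ∈ H := by
      rw [M.A7]
      exact hC.stable _ _ (hp j) fun k => hC.R_mem k _ h
    exact hC.mem_of_R_mem (hC.subset (hC.vUnitary _ _ hRy hp))

theorem mem_H_of_le (hC : M.StabilizerCriterion H U) {x y : G} (hxy : M.le x y)
    (hx : x ∈ H) : y ∈ H :=
  hC.vUnitary y _ (hxy ▸ hx) fun j => hC.R_mem j x (hC.subset hx)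

theorem mem_U_of_le (hC : M.StabilizerCriterion H U) {x y : G} (hxy : M.le x y)
    (hx : x ∈ U) : y ∈ U :=
  hC.mem_of_o_mem_of_forall_mem (fun j => hC.R_mem j x hx) (hxy ▸ hx)

theorem isTn_mem_of_le (hC : M.StabilizerCriterion H U) {x y : G} (hxy : M.le x y)
    (hx : x ∈ U) {t : G → G} (ht : M.IsTn t) (hty : t y ∈ U) : t x ∈ U := by
  induction ht with
  | id => exact hx
  | op t a b i ht ih =>
    have hy : t y ∈ U := by simpa using hC.mem_of_o_mem hty i
    exact hC.o_update_mem_of_le _ _ a b i (ht.le_apply hxy) (ih hy) hty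
  | proj t i _ ih => exact hC.subset (hC.R_mem i _ (ih (hC.mem_of_R_mem hty)))

theorem germ_of_le (hC : M.StabilizerCriterion H U) {x y : G} (hxy : M.le x y)
    (hx : x ∈ U) : M.germ H U x y := fun t ht =>
  have htxy := ht.le_apply hxy
  have hU : t y ∈ U → t x ∈ U := hC.isTn_mem_of_le hxy hx ht
  ⟨⟨hC.mem_H_of_le htxy, fun h => hC.mem_of_le _ _ htxy (hU (hC.subset h)) h⟩,
    ⟨hC.mem_U_of_le htxy, hU⟩⟩

theorem R_o_mem_iff (hC : M.StabilizerCriterion H U) (i : Fin n) (g : G) (y : Fin n → G) :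
    M.o (M.R i g) y ∈ U ↔ M.o g y ∈ U := by
  rw [M.A7]
  refine ⟨fun h => hC.mem_of_R_mem (hC.mem_of_o_mem h i), fun h => ?_⟩
  have hy : y i ∈ U := hC.mem_of_o_mem h i
  have hyR := hC.germ_o_of_mem (y i) (fun k => hC.R_mem k _ h) fun k => hC.R_mem k _ hy
  rwa [hyR.mem_U_iff, M.A2]

theorem germ_R_o (hC : M.StabilizerCriterion H U) (i : Fin n) {g : G} {y : Fin n → G}
    (h : M.o g y ∈ U) : M.germ H U (M.o (M.R i g) y) (y i) := by
  have hU := (hC.R_o_mem_iff i g y).2 h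
  rw [M.A7] at hU ⊢
  exact hC.germ_of_le (M.o_R_le _ _) hU

theorem germRep_isRep (hC : M.StabilizerCriterion H U) : M.IsRep (M.germRep H U) := by
  refine ⟨fun g h => funext fun v => ?_, fun i g => funext fun v => ?_⟩ <;>
    induction v using Quotient.induction_on_pi with | h y => ?_ <;> ext b
  · simp only [mem_comp, mem_germRep_mk, M.A1]
    constructor
    · rintro ⟨hU, rfl⟩
      exact ⟨_, fun i => ⟨hC.mem_of_o_mem hU i, rfl⟩, (mem_germRep_mk _ _ _).2 ⟨hU, rfl⟩⟩
    · rintro ⟨c, hc, hb⟩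
      obtain rfl : c = fun i => Quotient.mk _ (M.o (h i) y) := funext fun i => (hc i).2.symm
      exact (mem_germRep_mk _ _ _).1 hb
  · simp only [Ri, Part.mem_map_iff, mem_germRep_mk, hC.R_o_mem_iff]
    constructor
    · rintro ⟨hU, rfl⟩
      exact ⟨_, ⟨hU, rfl⟩, (Quotient.sound (hC.germ_R_o i hU)).symm⟩
    · rintro ⟨_, ⟨hU, rfl⟩, rfl⟩
      exact ⟨hU, Quotient.sound (hC.germ_R_o i hU)⟩

theorem stabilizerAt_germRep (hC : M.StabilizerCriterion H U) {h₀ : G} (hh₀ : h₀ ∈ H) :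
    stabilizerAt (M.germRep H U) (Quotient.mk _ h₀) = H := by
  ext g
  rw [mem_stabilizerAt, mem_germRep_mk g fun _ => h₀]
  constructor
  · rintro ⟨-, hg⟩
    have hgH : (M.o g fun _ => h₀) ∈ H := (Quotient.exact hg).mem_H_iff.2 hh₀
    exact hC.vUnitary g _ hgH fun _ => hh₀
  · intro hg
    have hgH : (M.o g fun _ => h₀) ∈ H := hC.stable g _ hg fun _ => hh₀
    exact ⟨hC.subset hgH, Quotient.sound (hC.germ_of_mem hgH hh₀)⟩

theorem isStabilizer (hC : M.StabilizerCriterion H U) (hH : H.Nonempty) :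
    M.IsStabilizer H :=
  let ⟨_, hh₀⟩ := hH
  ⟨_, _, _, hC.germRep_isRep, (hC.stabilizerAt_germRep hh₀).symm⟩

end StabilizerCriterion

end MengerSystem

/-- **Theorem 1.** A nonempty `H ⊆ G` is a stabilizer of a functional Menger
system of rank `n` iff it is a quasi-stable l-unitary normal v-complex contained
in some `U ⊆ G` with `Rᵢ U ⊆ H`, `Rᵢ (G∖U) ⊆ G∖U`, satisfying (f-1), (f-2), (f-3)
(including the cases with empty outer symbol). -/
theorem stabilizer_iff {n : ℕ} {G : Type u} (M : MengerSystem n G)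
    (H : Set G) (hH : H.Nonempty) :
    M.IsStabilizer H ↔
      (M.QuasiStable H ∧ M.LUnitary H ∧ M.NormalVComplex H ∧
        ∃ U : Set G, H ⊆ U ∧
          (∀ i : Fin n, ∀ x ∈ U, M.R i x ∈ H) ∧
          (∀ i : Fin n, ∀ x ∈ Uᶜ, M.R i x ∈ Uᶜ) ∧
          (∀ (x y : G) (t : G → G), M.IsTn t →
            x ∈ H → y ∈ H → t x ∈ U → t y ∈ U) ∧
          (∀ (x y u : G) (w : Fin n → G) (i : Fin n),
            x = M.o y (fun j => M.R j x) → x ∈ U →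
            M.o u (Function.update w i y) ∈ H →
            M.o u (Function.update w i x) ∈ H) ∧
          (∀ x y : G, x = M.o y (fun j => M.R j x) → x ∈ U → y ∈ H → x ∈ H) ∧
          (∀ (x y u : G) (w : Fin n → G) (i : Fin n),
            x = M.o y (fun j => M.R j x) → x ∈ U →
            M.o u (Function.update w i y) ∈ U →
            M.o u (Function.update w i x) ∈ U) ∧
          (∀ x y : G, x = M.o y (fun j => M.R j x) → x ∈ U → y ∈ U → x ∈ U)) := by
  constructor
  · rintro ⟨A, P, a, hP, rfl⟩
    exact ⟨hP.quasiStable a, hP.lUnitary a, hP.normalVComplex a, NPlace.domainAt P a,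
      NPlace.stabilizerAt_subset_domainAt P a, fun i _ => hP.R_mem_stabilizerAt a i,
      fun i _ => hP.R_mem_domainAt_compl a i, fun _ _ _ ht => hP.isTn_mem_domainAt a ht,
      fun _ _ _ _ _ => hP.o_update_mem_stabilizerAt_of_le a,
      fun _ _ => hP.mem_stabilizerAt_of_le a, fun _ _ _ _ _ => hP.o_update_mem_domainAt_of_le a,
      fun _ _ _ hx _ => hx⟩
  · rintro ⟨hq, hl, hv, U, hHU, hRU, hRUc, hf1, -, hf2, hf3, -⟩
    exact MengerSystem.StabilizerCriterion.isStabilizer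
      ⟨hq, hl, hv, hHU, hRU, hRUc, hf1, hf2, hf3⟩ hH
end

section
/- Let 𝒢_∧ = (G, o, ∧, R_1, …, R_n) be a functional Menger ∧-algebra of rank n and let H be a nonempty subset of G. Then H is a stabilizer of 𝒢_∧ if and only if: (1) H is a quasi-stable, ∧-stable and v-unitary subset of G; (2) there exists a subset U of G such that H ⊆ U, R_i U ⊆ H and R_i(G∖U) ⊆ G∖U for every i ∈ {1,…,n}; (3) for all x, y ∈ G: if x ∈ U and y ∈ H then y[R_1x…R_nx] ∈ H, and if x ∈ U and y ∈ U then y[R_1x…R_nx] ∈ U. -/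
/-!
If `P` represents the algebra and `H` is the stabilizer of `a`, the witness `U` is the set of `g`
with `P g (a,…,a)` defined.

Conversely, read `U` as "defined at the base point" and `p ∧ q ∈ U` as "`p` and `q` have the same
value there". The representing set consists of the classes of `G` under this equivalence `∼` (the
elements outside `U` forming one class, the undefined point), and `g` sends `(c₁,…,cₙ)` to the
class of `g[c₁…cₙ]`. This is well defined because an argument `wⱼ` may be replaced by its
restriction `m = wⱼ ∧ vⱼ` to a `∼`-equivalent `vⱼ`: `f[…wⱼ…] ∼ f[…wⱼ…][R m] = f[…m…][R m] ∼ f[…m…]`.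
Finally `g ∈ H` iff `g[e…e] ∼ e` for any `e ∈ H`, so `H` is the stabilizer of the class of `e`.
-/

universe u

/-- A functional Menger ∧-algebra of rank `n`. -/
structure MengerWAlgebra (n : ℕ) (G : Type u) extends MengerSystem n G where
  meet : G → G → G
  meet_comm : ∀ x y : G, meet x y = meet y x
  meet_assoc : ∀ x y z : G, meet (meet x y) z = meet x (meet y z)
  meet_idem : ∀ x : G, meet x x = x
  A8 : ∀ x y z : G,
    meet x (o y fun j => R j z) = o (meet x y) fun j => R j z
  A9 : ∀ x y : G, meet x y = o x fun j => R j (meet x y)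
  A10 : ∀ (x y : G) (z : Fin n → G),
    o (meet x y) z = meet (o x z) (o y z)

/-- A representation of a functional Menger ∧-algebra by `n`-place functions. -/
def MengerWAlgebra.IsRep {n : ℕ} {G : Type u} (M : MengerWAlgebra n G) {A : Type u}
    (P : G → NPlace n A) : Prop :=
  M.toMengerSystem.IsRep P ∧
  ∀ x y : G, P (M.meet x y) = NPlace.inter (P x) (P y)

/-- Stabilizers of a functional Menger ∧-algebra. -/
def MengerWAlgebra.IsStabilizer {n : ℕ} {G : Type u} (M : MengerWAlgebra n G)
    (H : Set G) : Prop :=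
  ∃ (A : Type u) (P : G → NPlace n A) (a : A),
    M.IsRep P ∧ H = {g : G | a ∈ P g fun _ => a}

/-- ∧-stable subset. -/
def MengerWAlgebra.MeetStable {n : ℕ} {G : Type u} (M : MengerWAlgebra n G)
    (H : Set G) : Prop :=
  ∀ x ∈ H, ∀ y ∈ H, M.meet x y ∈ H

namespace NPlace

variable {n : ℕ} {A : Type u}

theorem comp_apply_of_mem {f : NPlace n A} {g : Fin n → NPlace n A} {c b : Fin n → A}
    (hb : ∀ i, b i ∈ g i c) : comp f g c = f b := by
  have hargs : (⟨∀ i, (g i c).Dom, fun h i => (g i c).get (h i)⟩ : Part (Fin n → A))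
      = Part.some b :=
    Part.eq_some_iff.mpr ⟨fun i => Part.dom_iff_mem.mpr ⟨_, hb i⟩,
      funext fun i => Part.get_eq_of_mem (hb i) _⟩
  exact (congrArg (Part.bind · f) hargs).trans (Part.bind_some b f)

theorem comp_apply_of_not_dom {f : NPlace n A} {g : Fin n → NPlace n A} {c : Fin n → A}
    (h : ¬ ∀ i, (g i c).Dom) : comp f g c = Part.none :=
  Part.eq_none_iff'.mpr fun ⟨hd, _⟩ => h hd

theorem inter_apply {f g : NPlace n A} {a : Fin n → A} {o p : Part A} (hf : f a = o)
    (hg : g a = p) : inter f g a = ⟨o.Dom ∧ o = p, fun h => o.get h.1⟩ := by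
  subst hf hg
  rfl

end NPlace

namespace MengerSystem

variable {n : ℕ} {G : Type u} (M : MengerSystem n G)

/-- `x[R₁y…Rₙy]`: the restriction of `x` to the domain of `y`. -/
def restrict (x y : G) : G := M.o x fun j => M.R j y

theorem restrict_self (x : G) : M.restrict x x = x := M.A2 x

theorem R_restrict (i : Fin n) (x y : G) : M.R i (M.restrict x y) = M.restrict (M.R i x) y :=
  M.A4 i x y

theorem o_restrict (x : G) (y : Fin n → G) (z : G) :
    M.restrict (M.o x y) z = M.o x fun i => M.restrict (y i) z :=
  M.A1 x y _

theorem o_R (i : Fin n) (x : G) (y : Fin n → G) :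
    M.o (M.R i x) y = M.restrict (y i) (M.o x y) :=
  M.A7 i x y

theorem restrict_of_isEmpty [IsEmpty (Fin n)] (x y : G) : M.restrict x y = x :=
  (congrArg (M.o x) (Subsingleton.elim _ _)).trans (M.A2 x)

end MengerSystem

namespace MengerWAlgebra

variable {n : ℕ} {G : Type u} (M : MengerWAlgebra n G)

abbrev semilatticeInf : SemilatticeInf G :=
  @SemilatticeInf.mk' G ⟨M.meet⟩ M.meet_comm M.meet_assoc M.meet_idem

theorem restrict_meet_left (x y : G) : M.restrict x (M.meet x y) = M.meet x y :=
  (M.A9 x y).symm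

theorem restrict_meet_right (x y : G) : M.restrict y (M.meet x y) = M.meet x y := by
  rw [M.meet_comm, restrict_meet_left]

theorem meet_restrict (x y z : G) : M.meet x (M.restrict y z) = M.restrict (M.meet x y) z :=
  M.A8 x y z

theorem meet_restrict_self (x z : G) : M.meet x (M.restrict x z) = M.restrict x z := by
  rw [meet_restrict, M.meet_idem]

end MengerWAlgebra

section Stabilizers

variable {n : ℕ} {G : Type u}

structure StabilizerConditions (M : MengerWAlgebra n G) (H U : Set G) : Prop where
  quasiStable : M.toMengerSystem.QuasiStable H
  meetStable : M.MeetStable H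
  vUnitary : M.toMengerSystem.VUnitary H
  subset : H ⊆ U
  R_mem : ∀ i : Fin n, ∀ x ∈ U, M.R i x ∈ H
  R_mem_compl : ∀ i : Fin n, ∀ x ∈ Uᶜ, M.R i x ∈ Uᶜ
  restrict_mem : ∀ x ∈ U, ∀ y ∈ H, M.restrict y x ∈ H
  restrict_mem_U : ∀ x ∈ U, ∀ y ∈ U, M.restrict y x ∈ U

/-- `p` and `q` take the same (possibly undefined) value at the base point, `U` being the set of
elements defined there. -/
def SameValue (M : MengerWAlgebra n G) (U : Set G) (p q : G) : Prop :=
  (p ∈ U ↔ q ∈ U) ∧ (p ∈ U → M.meet p q ∈ U)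

namespace SameValue

variable (M : MengerWAlgebra n G) (U : Set G)

theorem refl (p : G) : SameValue M U p p :=
  ⟨Iff.rfl, fun h => by rwa [M.meet_idem]⟩

variable {M U}

theorem symm {p q : G} (h : SameValue M U p q) : SameValue M U q p :=
  ⟨h.1.symm, fun hq => by rw [M.meet_comm]; exact h.2 (h.1.mpr hq)⟩

end SameValue

namespace StabilizerConditions

variable {M : MengerWAlgebra n G} {H U : Set G} (hc : StabilizerConditions M H U)
include hc

theorem mem_U_iff_R_mem (i : Fin n) {x : G} : x ∈ U ↔ M.R i x ∈ H := by
  refine ⟨hc.R_mem i x, fun h => ?_⟩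
  by_contra hx
  exact hc.R_mem_compl i x hx (hc.subset h)

theorem mem_of_restrict_mem_U {y s : G} (hs : s ∈ U) (h : M.restrict y s ∈ U) : y ∈ U := by
  rcases isEmpty_or_nonempty (Fin n) with hn | hn
  · rwa [M.restrict_of_isEmpty] at h
  · obtain ⟨i⟩ := hn
    rw [hc.mem_U_iff_R_mem i, M.R_restrict] at h
    rw [hc.mem_U_iff_R_mem i]
    exact hc.vUnitary _ _ h fun j => hc.R_mem j s hs

theorem restrict_mem_U_iff {y s : G} (hs : s ∈ U) : M.restrict y s ∈ U ↔ y ∈ U :=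
  ⟨hc.mem_of_restrict_mem_U hs, hc.restrict_mem_U s hs y⟩

theorem mem_of_o_mem_U {x : G} {y : Fin n → G} (h : M.o x y ∈ U) (i : Fin n) : y i ∈ U := by
  refine hc.mem_of_restrict_mem_U h ?_
  rw [← M.o_R, hc.mem_U_iff_R_mem i, ← M.A6 i i]
  exact hc.R_mem i _ h

theorem o_R_mem_U_iff (i : Fin n) (x : G) (w : Fin n → G) :
    M.o (M.R i x) w ∈ U ↔ M.o x w ∈ U := by
  refine ⟨fun h => ?_, fun h => ?_⟩
  · rw [hc.mem_U_iff_R_mem i, M.A6 i i]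
    exact hc.R_mem i _ h
  · rw [M.o_R]
    exact hc.restrict_mem_U _ h _ (hc.mem_of_o_mem_U h i)

theorem mem_of_meet_mem_U_left {x y : G} (h : M.meet x y ∈ U) : x ∈ U :=
  hc.mem_of_restrict_mem_U h (by rwa [M.restrict_meet_left])

theorem mem_of_meet_mem_U_right {x y : G} (h : M.meet x y ∈ U) : y ∈ U :=
  hc.mem_of_meet_mem_U_left (by rwa [M.meet_comm])

theorem mem_of_restrict_mem {g h : G} (hh : h ∈ H) (hg : M.restrict g h ∈ H) : g ∈ H :=
  hc.vUnitary g _ hg fun j => hc.R_mem j h (hc.subset hh)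

theorem o_const_mem {x e : G} (hx : x ∈ H) (he : e ∈ H) : M.o x (fun _ => e) ∈ H := by
  -- with `m = x ∧ e`: `m[m…m] ≤ x[m…m] ≤ x[e…e]`, and `H` is closed upwards
  set m := M.meet x e
  have hm : m ∈ H := hc.meetStable x hx e he
  have hmm : M.o x (fun _ => m) ∈ H := by
    have hmm_eq : M.o m (fun _ => m) = M.o x fun _ => M.restrict m (M.o m fun _ => m) :=
      calc M.o m (fun _ => m) = M.o (M.restrict x m) (fun _ => m) := by
            rw [M.restrict_meet_left]
        _ = M.o x (fun j => M.o (M.R j m) fun _ => m) := M.A1 _ _ _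
        _ = M.o x fun _ => M.restrict m (M.o m fun _ => m) := by simp only [M.o_R]
    refine hc.mem_of_restrict_mem (hc.quasiStable m hm) ?_
    rw [M.o_restrict, ← hmm_eq]
    exact hc.quasiStable m hm
  refine hc.mem_of_restrict_mem hm ?_
  rwa [M.o_restrict, funext fun _ => M.restrict_meet_right x e]

theorem sameValue_trans {p q r : G} (hpq : SameValue M U p q) (hqr : SameValue M U q r) :
    SameValue M U p r := by
  refine ⟨hpq.1.trans hqr.1, fun hp => ?_⟩
  have hpq' := hpq.2 hp
  have hqr' := hqr.2 (hpq.1.mp hp)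
  let _ := M.semilatticeInf
  -- `(p ∧ q) ∧ (q ∧ r) = (p ∧ q)[R(q ∧ r)]` lies in `U` and below `p ∧ r`
  have hlow : M.meet (M.meet p q) (M.meet q r) = M.restrict (M.meet p q) (M.meet q r) := by
    conv_lhs => rw [← M.restrict_meet_left q r, M.meet_restrict]
    rw [show M.meet (M.meet p q) q = M.meet p q from inf_eq_left.mpr inf_le_right]
  have hle : M.meet (M.meet p r) (M.meet (M.meet p q) (M.meet q r))
      = M.meet (M.meet p q) (M.meet q r) :=
    inf_eq_right.mpr (le_inf (inf_le_left.trans inf_le_left) (inf_le_right.trans inf_le_right))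
  refine hc.mem_of_meet_mem_U_left (y := M.meet (M.meet p q) (M.meet q r)) ?_
  rw [hle, hlow]
  exact hc.restrict_mem_U _ hqr' _ hpq'

theorem sameValue_restrict {y s : G} (hs : s ∈ U) : SameValue M U y (M.restrict y s) :=
  ⟨(hc.restrict_mem_U_iff hs).symm, fun hy => by
    rw [M.meet_restrict_self]
    exact hc.restrict_mem_U s hs y hy⟩

theorem sameValue_o_update (f : G) (w : Fin n → G) {i : Fin n} {m : G} (hm : m ∈ U)
    (hle : M.restrict (w i) m = m) :
    SameValue M U (M.o f w) (M.o f (Function.update w i m)) := by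
  have hres : M.restrict (M.o f w) m = M.restrict (M.o f (Function.update w i m)) m := by
    rw [M.o_restrict, M.o_restrict]
    congr 1
    funext j
    rcases eq_or_ne j i with rfl | hj
    · rw [Function.update_self, hle, M.restrict_self]
    · rw [Function.update_of_ne hj]
  refine hc.sameValue_trans (hc.sameValue_restrict hm) ?_
  rw [hres]
  exact (hc.sameValue_restrict hm).symm

theorem sameValue_o_of_restrict_eq (f : G) {w m : Fin n → G} (hm : ∀ j, m j ∈ U)
    (hle : ∀ j, M.restrict (w j) (m j) = m j) : SameValue M U (M.o f w) (M.o f m) := by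
  classical
  suffices h : ∀ S : Finset (Fin n), SameValue M U (M.o f w) (M.o f (S.piecewise m w)) by
    simpa using h Finset.univ
  intro S
  induction S using Finset.induction_on with
  | empty => simpa using SameValue.refl M U (M.o f w)
  | insert a S ha ih =>
    rw [Finset.piecewise_insert]
    refine hc.sameValue_trans ih (hc.sameValue_o_update f _ (hm a) ?_)
    rw [Finset.piecewise_eq_of_notMem _ _ _ ha]
    exact hle a

theorem sameValue_o (f : G) {w v : Fin n → G} (hwv : ∀ j, SameValue M U (w j) (v j)) :
    SameValue M U (M.o f w) (M.o f v) := by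
  by_cases hw : ∀ j, w j ∈ U
  · have hm : ∀ j, M.meet (w j) (v j) ∈ U := fun j => (hwv j).2 (hw j)
    exact hc.sameValue_trans
      (hc.sameValue_o_of_restrict_eq f hm fun j => M.restrict_meet_left _ _)
      (hc.sameValue_o_of_restrict_eq f hm fun j => M.restrict_meet_right _ _).symm
  · obtain ⟨j, hj⟩ := not_forall.mp hw
    have hvj : v j ∉ U := fun h => hj ((hwv j).1.mpr h)
    exact ⟨iff_of_false (fun h => hj (hc.mem_of_o_mem_U h j))
      (fun h => hvj (hc.mem_of_o_mem_U h j)), fun h => absurd (hc.mem_of_o_mem_U h j) hj⟩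

theorem mem_iff_sameValue {e : G} (he : e ∈ H) (g : G) :
    g ∈ H ↔ SameValue M U (M.o g fun _ => e) e := by
  refine ⟨fun hg => ?_, fun h => ?_⟩
  · have hp := hc.o_const_mem hg he
    exact ⟨iff_of_true (hc.subset hp) (hc.subset he),
      fun _ => hc.subset (hc.meetStable _ hp _ he)⟩
  · set p := M.o g fun _ => e
    have hpe : M.meet p e ∈ H := by
      rw [← M.restrict_meet_right p e]
      exact hc.restrict_mem _ (h.2 (h.1.mpr (hc.subset he))) e he
    have hp : p ∈ H := hc.mem_of_restrict_mem hpe (by rwa [M.restrict_meet_left])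
    exact hc.vUnitary g _ hp fun _ => he

/-- Points of the representation are the `SameValue`-classes; the elements outside `U` form one
class, at which no `rep g` is defined. -/
def setoid : Setoid G :=
  ⟨SameValue M U, ⟨SameValue.refl M U, SameValue.symm, hc.sameValue_trans⟩⟩

def value (p : G) : Part (Quotient hc.setoid) := ⟨p ∈ U, fun _ => Quotient.mk _ p⟩

noncomputable def rep (g : G) : NPlace n (Quotient hc.setoid) :=
  fun c => hc.value (M.o g fun i => (c i).out)

theorem value_eq_value_iff {p q : G} : hc.value p = hc.value q ↔ SameValue M U p q := by
  refine ⟨fun h => ?_, fun h => Part.ext' h.1 fun _ _ => Quotient.sound h⟩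
  have hdom : p ∈ U ↔ q ∈ U := Iff.of_eq (congrArg Part.Dom h)
  refine ⟨hdom, fun hp => ?_⟩
  have hpq : Quotient.mk hc.setoid p = Quotient.mk _ q :=
    Part.mem_unique (h ▸ ⟨hp, rfl⟩ : Quotient.mk _ p ∈ hc.value q) ⟨hdom.mp hp, rfl⟩
  exact (Quotient.exact hpq).2 hp

theorem mk_mem_value_iff {p e : G} (he : e ∈ U) :
    Quotient.mk hc.setoid e ∈ hc.value p ↔ SameValue M U p e :=
  ⟨fun ⟨_, h⟩ => Quotient.exact h, fun h => ⟨h.1.mpr he, Quotient.sound h⟩⟩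

theorem value_meet (p q : G) : hc.value (M.meet p q) =
    ⟨(hc.value p).Dom ∧ hc.value p = hc.value q, fun h => (hc.value p).get h.1⟩ := by
  refine Part.ext' ?_ fun h _ => Quotient.sound ⟨iff_of_true h (hc.mem_of_meet_mem_U_left h), ?_⟩
  · rw [hc.value_eq_value_iff]
    exact ⟨fun hpq => ⟨hc.mem_of_meet_mem_U_left hpq, iff_of_true (hc.mem_of_meet_mem_U_left hpq)
      (hc.mem_of_meet_mem_U_right hpq), fun _ => hpq⟩, fun ⟨hp, hpq⟩ => hpq.2 hp⟩
  · intro _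
    rwa [M.meet_comm, ← M.meet_assoc, M.meet_idem]

theorem rep_apply_mk (g : G) (w : Fin n → G) :
    hc.rep g (fun i => Quotient.mk _ (w i)) = hc.value (M.o g w) :=
  hc.value_eq_value_iff.mpr <| hc.sameValue_o g fun i =>
    Quotient.exact (Quotient.out_eq (Quotient.mk hc.setoid (w i)))

theorem exists_eq_mk (c : Fin n → Quotient hc.setoid) :
    ∃ w : Fin n → G, c = fun i => Quotient.mk _ (w i) :=
  ⟨fun i => (c i).out, funext fun _ => (Quotient.out_eq _).symm⟩

theorem rep_o (x : G) (y : Fin n → G) :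
    hc.rep (M.o x y) = NPlace.comp (hc.rep x) fun i => hc.rep (y i) := by
  funext c
  obtain ⟨w, rfl⟩ := hc.exists_eq_mk c
  rw [hc.rep_apply_mk, M.A1]
  by_cases hy : ∀ i, M.o (y i) w ∈ U
  · rw [NPlace.comp_apply_of_mem (b := fun i => Quotient.mk _ (M.o (y i) w)), hc.rep_apply_mk]
    intro i
    rw [hc.rep_apply_mk]
    exact ⟨hy i, rfl⟩
  · rw [NPlace.comp_apply_of_not_dom (by simp only [hc.rep_apply_mk]; exact hy)]
    exact Part.eq_none_iff'.mpr fun h => hy (hc.mem_of_o_mem_U h)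

theorem rep_R (i : Fin n) (x : G) : hc.rep (M.R i x) = NPlace.Ri i (hc.rep x) := by
  funext c
  obtain ⟨w, rfl⟩ := hc.exists_eq_mk c
  show _ = (hc.rep x _).map _
  rw [hc.rep_apply_mk, hc.rep_apply_mk]
  refine Part.ext' (hc.o_R_mem_U_iff i x w) fun h _ => Quotient.sound ?_
  rw [M.o_R]
  exact (hc.sameValue_restrict ((hc.o_R_mem_U_iff i x w).mp h)).symm

theorem rep_meet (x y : G) : hc.rep (M.meet x y) = NPlace.inter (hc.rep x) (hc.rep y) := by
  funext c
  obtain ⟨w, rfl⟩ := hc.exists_eq_mk c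
  rw [hc.rep_apply_mk, M.A10, hc.value_meet,
    NPlace.inter_apply (hc.rep_apply_mk x w) (hc.rep_apply_mk y w)]

theorem isRep : M.IsRep hc.rep :=
  ⟨⟨hc.rep_o, hc.rep_R⟩, hc.rep_meet⟩

theorem isStabilizer {e : G} (he : e ∈ H) : M.IsStabilizer H := by
  refine ⟨_, hc.rep, Quotient.mk _ e, hc.isRep, Set.ext fun g => ?_⟩
  change g ∈ H ↔ Quotient.mk _ e ∈ hc.rep g fun _ => Quotient.mk _ e
  rw [hc.rep_apply_mk g (fun _ => e), hc.mk_mem_value_iff (hc.subset he)]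
  exact hc.mem_iff_sameValue he g

end StabilizerConditions

theorem StabilizerConditions.of_isStabilizer {M : MengerWAlgebra n G} {H : Set G}
    (hst : M.IsStabilizer H) : ∃ U, StabilizerConditions M H U := by
  obtain ⟨A, P, a, ⟨⟨hP_o, hP_R⟩, hP_meet⟩, rfl⟩ := hst
  have hR : ∀ i x, (P x fun _ => a).Dom → a ∈ P (M.R i x) fun _ => a := fun i x hx => by
    rw [hP_R]
    exact Part.mem_map _ (Part.get_mem hx)
  have hrestrict : ∀ x y, (P x fun _ => a).Dom →
      P (M.restrict y x) (fun _ => a) = P y fun _ => a := fun x y hx => by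
    rw [MengerSystem.restrict, hP_o]
    exact NPlace.comp_apply_of_mem fun i => hR i x hx
  refine ⟨{g | (P g fun _ => a).Dom}, ⟨?_, ?_, ?_, ?_, ?_, ?_, ?_, ?_⟩⟩
  · intro x (hx : a ∈ P x fun _ => a)
    show a ∈ P (M.o x fun _ => x) fun _ => a
    rwa [hP_o, NPlace.comp_apply_of_mem fun _ => hx]
  · intro x (hx : a ∈ P x fun _ => a) y (hy : a ∈ P y fun _ => a)
    show a ∈ P (M.meet x y) fun _ => a
    rw [hP_meet]
    exact ⟨⟨Part.dom_iff_mem.mpr ⟨a, hx⟩,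
      (Part.eq_some_iff.mpr hx).trans (Part.eq_some_iff.mpr hy).symm⟩, Part.get_eq_of_mem hx _⟩
  · intro x y (hxy : a ∈ P (M.o x y) fun _ => a) hy
    rwa [hP_o, NPlace.comp_apply_of_mem hy] at hxy
  · exact fun g hg => Part.dom_iff_mem.mpr ⟨a, hg⟩
  · exact hR
  · intro i x hx (hRx : (P (M.R i x) fun _ => a).Dom)
    rw [hP_R] at hRx
    exact hx hRx
  · intro x hx y (hy : a ∈ P y fun _ => a)
    show a ∈ P (M.restrict y x) fun _ => a
    rwa [hrestrict x y hx]
  · intro x hx y (hy : (P y fun _ => a).Dom)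
    show (P (M.restrict y x) fun _ => a).Dom
    rwa [hrestrict x y hx]

end Stabilizers

/-- **Theorem 4.** A nonempty `H ⊆ G` is a stabilizer of a functional Menger
∧-algebra of rank `n` iff (1) it is quasi-stable, ∧-stable and v-unitary;
(2) there is `U ⊆ G` with `H ⊆ U`, `Rᵢ U ⊆ H`, `Rᵢ (G∖U) ⊆ G∖U`;
(3) `x ∈ U ∧ y ∈ H → y[R₁x…Rₙx] ∈ H` and `x ∈ U ∧ y ∈ U → y[R₁x…Rₙx] ∈ U`. -/
theorem wAlgebra_stabilizer_iff {n : ℕ} {G : Type u} (M : MengerWAlgebra n G)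
    (H : Set G) (hH : H.Nonempty) :
    M.IsStabilizer H ↔
      ((M.toMengerSystem.QuasiStable H ∧ M.MeetStable H ∧
          M.toMengerSystem.VUnitary H) ∧
        ∃ U : Set G, (H ⊆ U ∧
          (∀ i : Fin n, ∀ x ∈ U, M.R i x ∈ H) ∧
          (∀ i : Fin n, ∀ x ∈ Uᶜ, M.R i x ∈ Uᶜ)) ∧
          (∀ x ∈ U, ∀ y ∈ H, M.o y (fun j => M.R j x) ∈ H) ∧
          (∀ x ∈ U, ∀ y ∈ U, M.o y (fun j => M.R j x) ∈ U)) := by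
  constructor
  · intro hst
    obtain ⟨U, hc⟩ := StabilizerConditions.of_isStabilizer hst
    exact ⟨⟨hc.quasiStable, hc.meetStable, hc.vUnitary⟩, U,
      ⟨hc.subset, hc.R_mem, hc.R_mem_compl⟩, hc.restrict_mem, hc.restrict_mem_U⟩
  · rintro ⟨⟨hQ, hM, hV⟩, U, ⟨hHU, hR, hRc⟩, hH3, hU3⟩
    obtain ⟨e, he⟩ := hH
    exact StabilizerConditions.isStabilizer ⟨hQ, hM, hV, hHU, hR, hRc, hH3, hU3⟩ he
end

section
/- Let Φ be a set of n-place functions on a set A that is closed under Menger composition and under each operation R_i, and let a ∈ A. Then the stabilizer H^a_Φ is a normal v-complex of (Φ, 𝒪, R_1, …, R_n): for all f, g ∈ Φ and every t ∈ T_n(Φ), if f, g ∈ H^a_Φ and t(f) ∈ H^a_Φ, then t(g) ∈ H^a_Φ. -/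
universe u

namespace NPlace

variable {n : ℕ} {A : Type u}

/-- The stabilizer `H^a_Φ = {f ∈ Φ : f(a,…,a) = a}`. -/
def stab (Φ : Set (NPlace n A)) (a : A) : Set (NPlace n A) :=
  {f | f ∈ Φ ∧ a ∈ f fun _ => a}

/-- `U^a_Φ = {f ∈ Φ : (a,…,a) ∈ dom f}`. -/
def ustab (Φ : Set (NPlace n A)) (a : A) : Set (NPlace n A) :=
  {f | f ∈ Φ ∧ (f fun _ => a).Dom}

end NPlace

/-- `T_n(Φ)`: the least set of transformations of `n`-place functions containing
the identity and closed under `t ↦ (f ↦ α[ω̄|ᵢ t f])` (`α, ωⱼ ∈ Φ`) and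
`t ↦ (f ↦ Rᵢ (t f))`. -/
inductive IsTnF {n : ℕ} {A : Type u} (Φ : Set (NPlace n A)) :
    (NPlace n A → NPlace n A) → Prop
  | id : IsTnF Φ id
  | op (t : NPlace n A → NPlace n A) (α : NPlace n A) (ω : Fin n → NPlace n A)
      (i : Fin n) : α ∈ Φ → (∀ j, ω j ∈ Φ) → IsTnF Φ t →
      IsTnF Φ fun f => NPlace.comp α (Function.update ω i (t f))
  | proj (t : NPlace n A → NPlace n A) (i : Fin n) :
      IsTnF Φ t → IsTnF Φ fun f => NPlace.Ri i (t f)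


/-! Every `t ∈ T_n(Φ)` maps `Φ` into itself, and the value of `t f` at a point depends only on
the value of `f` there. Two members of `H^a_Φ` both take the value `a` at `(a,…,a)`, so `t f` and
`t g` agree at `(a,…,a)`. -/

namespace NPlace

variable {n : ℕ} {A : Type u}

theorem comp_apply_congr (f : NPlace n A) {g g' : Fin n → NPlace n A} {x : Fin n → A}
    (h : ∀ i, g i x = g' i x) : comp f g x = comp f g' x :=
  congrArg (fun p : Fin n → Part A =>
    (⟨∀ i, (p i).Dom, fun hd i => (p i).get (hd i)⟩ : Part (Fin n → A)).bind f) (funext h)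

theorem Ri_apply_congr (i : Fin n) {f g : NPlace n A} {x : Fin n → A} (h : f x = g x) :
    Ri i f x = Ri i g x := by
  simp only [Ri, h]

end NPlace

namespace IsTnF

variable {n : ℕ} {A : Type u} {Φ : Set (NPlace n A)} {t : NPlace n A → NPlace n A}

theorem mapsTo (ht : IsTnF Φ t)
    (hcomp : ∀ f ∈ Φ, ∀ g : Fin n → NPlace n A, (∀ i, g i ∈ Φ) → NPlace.comp f g ∈ Φ)
    (hR : ∀ i : Fin n, ∀ f ∈ Φ, NPlace.Ri i f ∈ Φ) : Set.MapsTo t Φ Φ := by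
  induction ht with
  | id => exact Set.mapsTo_id Φ
  | op t α ω i hα hω _ ih =>
    intro f hf
    refine hcomp α hα _ fun j => ?_
    rcases eq_or_ne j i with rfl | hj
    · simpa using ih hf
    · simpa [Function.update_of_ne hj] using hω j
  | proj t i _ ih => exact fun f hf => hR i _ (ih hf)

theorem apply_congr (ht : IsTnF Φ t) {f g : NPlace n A} {x : Fin n → A} (h : f x = g x) :
    t f x = t g x := by
  induction ht with
  | id => exact h
  | op t α ω i _ _ _ ih =>
    refine NPlace.comp_apply_congr α fun j => ?_
    rcases eq_or_ne j i with rfl | hj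
    · simpa using ih
    · simp [Function.update_of_ne hj]
  | proj t i _ ih => exact NPlace.Ri_apply_congr i ih

end IsTnF

/-- The stabilizer `H^a_Φ` is a normal v-complex: `f, g ∈ H^a_Φ` and
`t f ∈ H^a_Φ` imply `t g ∈ H^a_Φ` for every `t ∈ T_n(Φ)`. -/
theorem stab_normalVComplex {n : ℕ} {A : Type u} (Φ : Set (NPlace n A))
    (hcomp : ∀ f ∈ Φ, ∀ g : Fin n → NPlace n A, (∀ i, g i ∈ Φ) →
      NPlace.comp f g ∈ Φ)
    (hR : ∀ i : Fin n, ∀ f ∈ Φ, NPlace.Ri i f ∈ Φ)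
    (a : A) :
    ∀ f ∈ NPlace.stab Φ a, ∀ g ∈ NPlace.stab Φ a,
      ∀ t : NPlace n A → NPlace n A, IsTnF Φ t →
        t f ∈ NPlace.stab Φ a → t g ∈ NPlace.stab Φ a := by
  intro f hf g hg t ht htf
  have hfg : (f fun _ => a) = g fun _ => a := by
    rw [Part.eq_some_iff.mpr hf.2, Part.eq_some_iff.mpr hg.2]
  exact ⟨ht.mapsTo hcomp hR hg.1, ht.apply_congr hfg ▸ htf.2⟩
end

section
/- Let 𝒢 = (G, o, R_1, …, R_n) be a functional Menger system of rank n. Every l-unitary normal v-complex H ⊆ G is v-unitary: if x[y_1…y_n] ∈ H and y_1,…,y_n ∈ H, then x ∈ H. -/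
/-!
Normality applied to `w ↦ x[y₁…w…yₙ]` lets one exchange, one slot at a time, each argument
`yᵢ ∈ H` of `x[y₁…yₙ] ∈ H` for any other element of `H`. Filling every slot with
`w = x[y₁…yₙ] ∈ H` gives `x[w…w] ∈ H`, and l-unitarity yields `x ∈ H`.
-/

universe u

namespace MengerSystem

variable {n : ℕ} {G : Type u} {M : MengerSystem n G} {H : Set G}

theorem IsTn.o_update (a : G) (b : Fin n → G) (i : Fin n) :
    M.IsTn fun w => M.o a (Function.update b i w) :=
  .op _ a b i .id

theorem NormalVComplex.o_piecewise_mem (hH : M.NormalVComplex H) {x : G} {y z : Fin n → G}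
    (hxy : M.o x y ∈ H) (hy : ∀ i, y i ∈ H) (hz : ∀ i, z i ∈ H) (s : Finset (Fin n)) :
    M.o x (s.piecewise z y) ∈ H := by
  induction s using Finset.induction_on with
  | empty => simpa using hxy
  | insert i s hi ih =>
    rw [Finset.piecewise_insert]
    refine hH _ (IsTn.o_update x _ i) (y i) (hy i) (z i) (hz i) ?_
    rwa [← s.piecewise_eq_of_notMem z y hi, Function.update_eq_self]

theorem NormalVComplex.o_mem_of_mem (hH : M.NormalVComplex H) {x : G} {y z : Fin n → G}
    (hxy : M.o x y ∈ H) (hy : ∀ i, y i ∈ H) (hz : ∀ i, z i ∈ H) : M.o x z ∈ H := by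
  simpa using hH.o_piecewise_mem hxy hy hz Finset.univ

end MengerSystem

/-- Every l-unitary normal v-complex is v-unitary. -/
theorem lUnitary_normal_vUnitary {n : ℕ} {G : Type u} (M : MengerSystem n G)
    (H : Set G) (hlu : M.LUnitary H) (hnc : M.NormalVComplex H) :
    M.VUnitary H := by
  intro x y hxy hy
  -- filling the slots with `x[y]` rather than some `y i` also covers `n = 0`
  exact hlu x _ (hnc.o_mem_of_mem hxy hy fun _ => hxy) hxy
end

section
/- Let 𝒢 = (G, o, R_1, …, R_n) be a functional Menger system of rank n, let H ⊆ G be an l-unitary normal v-complex, and let U ⊆ G satisfy H ⊆ U and R_i U ⊆ H for every i ∈ {1,…,n}. Then for all x, y ∈ G: if x ≤ y and x ∈ H, then y ∈ H. -/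
universe u

/-! Since `x = y[R₁x…Rₙx]` and `x` as well as every `Rᵢx` lie in `H`, the normal v-complex
property lets us replace the arguments `Rᵢx` by `x` one coordinate at a time, giving
`y[x…x] ∈ H`; l-unitarity then yields `y ∈ H`. -/

namespace MengerSystem

variable {n : ℕ} {G : Type u} {M : MengerSystem n G} {H : Set G}

theorem NormalVComplex.o_update_mem (hnc : M.NormalVComplex H) {y a b : G} {u : Fin n → G}
    {i : Fin n} (ha : a ∈ H) (hb : b ∈ H) (h : M.o y (Function.update u i a) ∈ H) :
    M.o y (Function.update u i b) ∈ H :=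
  hnc _ (.op id y u i .id) a ha b hb h

theorem NormalVComplex.o_mem_of_o_mem (hnc : M.NormalVComplex H) {y : G} {u v : Fin n → G}
    (hu : ∀ i, u i ∈ H) (hv : ∀ i, v i ∈ H) (h : M.o y u ∈ H) : M.o y v ∈ H := by
  classical
  suffices ∀ s : Finset (Fin n), M.o y (s.piecewise v u) ∈ H by
    simpa only [Finset.piecewise_univ] using this Finset.univ
  intro s
  induction s using Finset.induction_on with
  | empty => simpa only [Finset.piecewise_empty] using h
  | insert i s hi ih =>
    rw [Finset.piecewise_insert]
    refine hnc.o_update_mem (hu i) (hv i) ?_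
    rwa [← Finset.piecewise_eq_of_notMem s v u hi, Function.update_eq_self]

end MengerSystem

/-- Condition (f-4): if `H` is an l-unitary normal v-complex, `H ⊆ U` and
`Rᵢ U ⊆ H`, then `x ≤ y ∧ x ∈ H → y ∈ H`. -/
theorem mem_of_le {n : ℕ} {G : Type u} (M : MengerSystem n G)
    (H U : Set G) (hlu : M.LUnitary H) (hnc : M.NormalVComplex H)
    (hHU : H ⊆ U) (hRU : ∀ i : Fin n, ∀ x ∈ U, M.R i x ∈ H) :
    ∀ x y : G, M.le x y → x ∈ H → y ∈ H := by
  intro x y hle hx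
  have hRx : ∀ i, M.R i x ∈ H := fun i => hRU i x (hHU hx)
  have hy : M.o y (fun i => M.R i x) ∈ H := hle ▸ hx
  exact hlu y x (hnc.o_mem_of_o_mem hRx (fun _ => hx) hy) hx
end

section
/- Let 𝒢 = (G, o, R_1, …, R_n) be a functional Menger system of rank n, let H ⊆ G be an l-unitary normal v-complex, and let U ⊆ G satisfy H ⊆ U, R_i U ⊆ H and R_i(G∖U) ⊆ G∖U for every i ∈ {1,…,n}. Then G∖U is an l-ideal of 𝒢: for all x ∈ G, u ∈ G, w̄ ∈ G^n and i ∈ {1,…,n}, if x ∈ G∖U then u[w̄|_i x] ∈ G∖U; equivalently, x[y_1…y_n] ∈ G∖U whenever at least one y_i ∈ G∖U. -/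
universe u

/-!
If `u[ȳ] ∈ U` while `yᵢ ∉ U`, axioms A4, A6 and A7 give `(Rᵢ yᵢ)[R̄(u[ȳ])] = Rᵢ(u[ȳ])`, and both
this element and all `Rₖ(u[ȳ])` lie in `H` since `R̄ U ⊆ H`. An l-unitary normal v-complex is
v-unitary, so `Rᵢ yᵢ ∈ H ⊆ U`, contradicting `Rᵢ(G∖U) ⊆ G∖U`.
-/

namespace MengerSystem

variable {n : ℕ} {G : Type u} {M : MengerSystem n G}

theorem R_o_eq (M : MengerSystem n G) (i j : Fin n) (u : G) (y : Fin n → G) :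
    M.R j (M.o u y) = M.o (M.R j (y i)) fun k => M.R k (M.o u y) := by
  rw [← M.A4, ← M.A7, ← M.A6]

theorem NormalVComplex.o_mem_of_forall_mem {H : Set G} (hnc : M.NormalVComplex H) {x : G}
    {y y' : Fin n → G} (hy : ∀ i, y i ∈ H) (hy' : ∀ i, y' i ∈ H) (h : M.o x y ∈ H) :
    M.o x y' ∈ H := by
  classical
  suffices ∀ s : Finset (Fin n), M.o x (s.piecewise y' y) ∈ H by
    simpa using this Finset.univ
  intro s
  induction s using Finset.induction_on with
  | empty => simpa using h
  | insert a s _ ih =>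
    set v := s.piecewise y' y
    have hv : v a ∈ H := by
      by_cases ha : a ∈ s <;> simp [v, ha, hy, hy']
    have ht : M.IsTn fun w => M.o x (Function.update v a (id w)) := .op id x v a .id
    rw [Finset.piecewise_insert]
    exact hnc _ ht (v a) hv (y' a) (hy' a) (by simpa using ih)

-- Replace `ȳ` by the constant tuple with value `x[ȳ] ∈ H`, then apply l-unitarity.
theorem LUnitary.vUnitary {H : Set G} (hlu : M.LUnitary H) (hnc : M.NormalVComplex H) :
    M.VUnitary H := fun x _ hxy hy =>
  hlu x _ (hnc.o_mem_of_forall_mem hy (fun _ => hxy) hxy) hxy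

theorem LIdeal.o_update_mem {S : Set G} (hS : M.LIdeal S) {x : G} (u : G) (w : Fin n → G)
    (i : Fin n) (hx : x ∈ S) : M.o u (Function.update w i x) ∈ S :=
  hS u _ ⟨i, by simpa using hx⟩

end MengerSystem

/-- `G∖U` is an l-ideal: if `x ∈ G∖U` then `u[w̄|ᵢ x] ∈ G∖U`; equivalently,
`x[y₁…yₙ] ∈ G∖U` whenever some `yᵢ ∈ G∖U`. -/
theorem compl_lIdeal {n : ℕ} {G : Type u} (M : MengerSystem n G)
    (H U : Set G) (hlu : M.LUnitary H) (hnc : M.NormalVComplex H)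
    (hHU : H ⊆ U) (hRU : ∀ i : Fin n, ∀ x ∈ U, M.R i x ∈ H)
    (hRU' : ∀ i : Fin n, ∀ x ∈ Uᶜ, M.R i x ∈ Uᶜ) :
    (∀ (x : G) (u : G) (w : Fin n → G) (i : Fin n),
      x ∈ Uᶜ → M.o u (Function.update w i x) ∈ Uᶜ) ∧ M.LIdeal Uᶜ := by
  have hideal : M.LIdeal Uᶜ := by
    rintro u y ⟨i, hyi⟩ hz
    have hRz : ∀ k, M.R k (M.o u y) ∈ H := fun k => hRU k _ hz
    have hRyi : M.R i (y i) ∈ H :=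
      (hlu.vUnitary hnc) _ _ (M.R_o_eq i i u y ▸ hRz i) hRz
    exact hRU' i (y i) hyi (hHU hRyi)
  exact ⟨fun x u w i hx => hideal.o_update_mem u w i hx, hideal⟩
end
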